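/- arXiv:2411.17325 — 2 statements merged into one kernel-verified Lean document; each statement's English description precedes it below -/
import Mathlib

section
/- For all real numbers 0 ≤ a < b, integer N ≥ 2, and all t with a ≤ t ≤ b, one has (a^(N-1) * (b^N - t^N) + b^(N-1) * (t^N - a^N)) / (b^N - a^N) ≤ t^(N-1). -/
theorem annulus_key_inequality (a b t : ℝ) (N : ℕ) (hN : 2 ≤ N)
    (ha : 0 ≤ a) (hab : a < b) (hta : a ≤ t) (htb : t ≤ b) :
    (a ^ (N - 1) * (b ^ N - t ^ N) + b ^ (N - 1) * (t ^ N - a ^ N)) / (b ^ N - a ^ N)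
      ≤ t ^ (N - 1) := by
  have ht : 0 ≤ t := le_trans ha hta
  have hN0 : N ≠ 0 := by omega
  have hpow : a ^ N < b ^ N := pow_lt_pow_left₀ hab ha hN0
  have hden : 0 < b ^ N - a ^ N := sub_pos.mpr hpow
  rw [div_le_iff₀ hden]
  set m := N - 1 with hm
  have hm0 : m ≠ 0 := by omega
  rcases eq_or_lt_of_le hta with rfl | hta'
  · exact le_of_eq (by ring)
  rcases eq_or_lt_of_le htb with rfl | htb'
  · exact le_of_eq (by ring)
  -- main case: a < t < b
  have hmR : (0:ℝ) < (m:ℝ) := by exact_mod_cast Nat.pos_of_ne_zero hm0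
  have hp : (1:ℝ) ≤ (N:ℝ) / (m:ℝ) := by
    rw [le_div_iff₀ hmR, one_mul]
    exact_mod_cast Nat.sub_le N 1
  have hconv := convexOn_rpow hp
  have key : ∀ x : ℝ, 0 ≤ x → (x ^ m) ^ ((N:ℝ)/(m:ℝ)) = x ^ N := by
    intro x hx
    rw [← Real.rpow_natCast x m, ← Real.rpow_mul hx]
    rw [show (m:ℝ) * ((N:ℝ)/(m:ℝ)) = (N:ℝ) by field_simp]
    exact Real.rpow_natCast x N
  have h1 : a ^ m < t ^ m := pow_lt_pow_left₀ hta' ha hm0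
  have h2 : t ^ m < b ^ m := pow_lt_pow_left₀ htb' ht hm0
  have hslope := hconv.slope_mono_adjacent (x := a ^ m) (y := t ^ m) (z := b ^ m)
    (pow_nonneg ha m) (pow_nonneg (le_trans ha hab.le) m) h1 h2
  simp only [key a ha, key t ht, key b (le_trans ha (le_of_lt hab))] at hslope
  rw [div_le_div_iff₀ (sub_pos.mpr h1) (sub_pos.mpr h2)] at hslope
  nlinarith [hslope]
end

section
/- Let v : [a,b] → ℝ be C¹ with 0 < a < b, N ≥ 2. Then a^(N−1)|v(a)| + b^(N−1)|v(b)| ≤ ((N a^(N−1) + N b^(N−1))/(b^N − a^N)) ∫_a^b |v(r)| r^(N−1) dr + ∫_a^b t^(N−1) |v'(t)| dt. -/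
/-!
For `a ≤ t ≤ b` the fundamental theorem of calculus gives `|v a| ≤ |v t| + ∫_a^t |v'|` and
`|v b| ≤ |v t| + ∫_t^b |v'|`. Weighting the first by `a^(N-1)`, the second by `b^(N-1)`, and
averaging over `t` against `t^(N-1) dt` (an integration by parts against the primitive `t^N / N`)
leaves `|v' s|` with the coefficient `(a^(N-1) (b^N - s^N) + b^(N-1) (s^N - a^N)) / N`, which is at
most `s^(N-1) (b^N - a^N) / N`.
-/

open Set intervalIntegral
open MeasureTheory (volume)

lemma pow_mul_pow_le_pow_mul_pow {a b : ℝ} (ha : 0 ≤ a) (hab : a ≤ b) {i m : ℕ}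
    (him : i ≤ m) :
    a ^ m * b ^ i ≤ b ^ m * a ^ i := by
  obtain ⟨k, rfl⟩ := Nat.exists_eq_add_of_le him
  calc a ^ (i + k) * b ^ i = (a * b) ^ i * a ^ k := by ring
    _ ≤ (a * b) ^ i * b ^ k := by have := ha.trans hab; gcongr
    _ = b ^ (i + k) * a ^ i := by ring

lemma pow_mul_sub_mul_pow_sub_le {a b t : ℝ} (ha : 0 ≤ a) (hat : a ≤ t) (htb : t ≤ b)
    (m : ℕ) :
    a ^ m * (t - a) * (b ^ m - t ^ m) ≤ b ^ m * (b - t) * (t ^ m - a ^ m) := by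
  have hsum : a ^ m * ∑ i ∈ Finset.range m, b ^ i * t ^ (m - 1 - i) ≤
      b ^ m * ∑ i ∈ Finset.range m, a ^ i * t ^ (m - 1 - i) := by
    simp only [Finset.mul_sum, ← mul_assoc]
    refine Finset.sum_le_sum fun i hi => ?_
    exact mul_le_mul_of_nonneg_right
      (pow_mul_pow_le_pow_mul_pow ha (hat.trans htb) (Finset.mem_range.mp hi).le)
      (pow_nonneg (ha.trans hat) _)
  rw [← geom_sum₂_mul, ← geom_sum₂_mul, geom_sum₂_comm t a]
  have hpos : 0 ≤ (t - a) * (b - t) := mul_nonneg (sub_nonneg.mpr hat) (sub_nonneg.mpr htb)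
  nlinarith [mul_le_mul_of_nonneg_left hsum hpos]

/-- Concavity of `s ↦ s ^ (m / (m + 1))`: its chord over `[a ^ (m + 1), b ^ (m + 1)]` lies below
its graph. -/
lemma pow_chord_le {a b t : ℝ} (ha : 0 ≤ a) (hat : a ≤ t) (htb : t ≤ b) (m : ℕ) :
    a ^ m * (b ^ (m + 1) - t ^ (m + 1)) + b ^ m * (t ^ (m + 1) - a ^ (m + 1)) ≤
      (b ^ (m + 1) - a ^ (m + 1)) * t ^ m := by
  linear_combination pow_mul_sub_mul_pow_sub_le ha hat htb m

lemma abs_sub_le_integral_abs_of_hasDerivAt {v v' : ℝ → ℝ} {x y : ℝ} (hxy : x ≤ y)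
    (hderiv : ∀ t ∈ Icc x y, HasDerivAt v (v' t) t) (hint : IntervalIntegrable v' volume x y) :
    |v y - v x| ≤ ∫ t in x..y, |v' t| := by
  rw [← integral_eq_sub_of_hasDerivAt (by rwa [uIcc_of_le hxy]) hint]
  exact abs_integral_le_integral_abs hxy

lemma integral_mul_primitive_eq {a b : ℝ} {w W g : ℝ → ℝ} (hab : a ≤ b)
    (hW : ∀ t ∈ Icc a b, HasDerivAt W (w t) t) (hw : IntervalIntegrable w volume a b)
    (hg : ContinuousOn g (Icc a b)) :
    ∫ t in a..b, w t * ∫ s in a..t, g s = ∫ s in a..b, (W b - W s) * g s := by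
  rw [← uIcc_of_le hab] at hW hg
  have hG : ∀ x ∈ Ioo (min a b) (max a b), HasDerivAt (fun t => ∫ s in a..t, g s) (g x) x :=
    fun x hx => integral_hasDerivAt_right
      (hg.intervalIntegrable.mono_set (uIcc_subset_uIcc_left (Ioo_subset_Icc_self hx)))
      (hg.mono Ioo_subset_Icc_self |>.stronglyMeasurableAtFilter isOpen_Ioo x hx)
      (hg.continuousAt (Icc_mem_nhds hx.1 hx.2))
  have hparts := integral_mul_deriv_eq_deriv_mul_of_hasDerivAt (u := fun s => W b - W s)
    (fun x hx => (continuousAt_const.sub (hW x hx).continuousAt).continuousWithinAt)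
    (continuousOn_primitive_interval hg.integrableOn_uIcc)
    (fun x hx => (hW x (Ioo_subset_Icc_self hx)).const_sub (W b)) hG hw.neg
    hg.intervalIntegrable
  simp only [sub_self, zero_mul, integral_same, mul_zero, zero_sub, neg_mul,
    intervalIntegral.integral_neg, neg_neg] at hparts
  exact hparts.symm

lemma abs_endpoints_le {a b α β t : ℝ} {v v' : ℝ → ℝ} (hα : 0 ≤ α) (hβ : 0 ≤ β)
    (hderiv : ∀ t ∈ Icc a b, HasDerivAt v (v' t) t) (hcont : ContinuousOn v' (Icc a b))
    (ht : t ∈ Icc a b) :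
    α * |v a| + β * |v b| ≤ (α + β) * |v t| + β * (∫ s in a..b, |v' s|) +
      (α - β) * ∫ s in a..t, |v' s| := by
  have haI : a ∈ Icc a b := left_mem_Icc.2 (ht.1.trans ht.2)
  have hbI : b ∈ Icc a b := right_mem_Icc.2 (ht.1.trans ht.2)
  have hint : ∀ x ∈ Icc a b, ∀ y ∈ Icc a b, IntervalIntegrable v' volume x y :=
    fun x hx y hy => (hcont.mono (uIcc_subset_Icc hx hy)).intervalIntegrable
  have ha : |v a| ≤ |v t| + ∫ s in a..t, |v' s| := by
    have := abs_sub_le_integral_abs_of_hasDerivAt ht.1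
      (fun s hs => hderiv s ⟨hs.1, hs.2.trans ht.2⟩) (hint a haI t ht)
    linarith [abs_sub_abs_le_abs_sub (v a) (v t), abs_sub_comm (v a) (v t)]
  have hb : |v b| ≤ |v t| + ∫ s in t..b, |v' s| := by
    have := abs_sub_le_integral_abs_of_hasDerivAt ht.2
      (fun s hs => hderiv s ⟨ht.1.trans hs.1, hs.2⟩) (hint t ht b hbI)
    linarith [abs_sub_abs_le_abs_sub (v b) (v t)]
  have hsplit := integral_add_adjacent_intervals (hint a haI t ht).abs (hint t ht b hbI).abs
  linear_combination α * ha + β * hb + β * hsplit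

lemma weighted_abs_endpoints_le {a b α β : ℝ} {v v' w W : ℝ → ℝ} (hab : a ≤ b)
    (hα : 0 ≤ α) (hβ : 0 ≤ β) (hderiv : ∀ t ∈ Icc a b, HasDerivAt v (v' t) t)
    (hcont : ContinuousOn v' (Icc a b)) (hW : ∀ t ∈ Icc a b, HasDerivAt W (w t) t)
    (hw : ContinuousOn w (Icc a b)) (hw0 : ∀ t ∈ Icc a b, 0 ≤ w t)
    (hchord : ∀ s ∈ Icc a b, α * (W b - W s) + β * (W s - W a) ≤ (W b - W a) * w s) :
    (W b - W a) * (α * |v a| + β * |v b|) ≤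
      (α + β) * (∫ t in a..b, |v t| * w t) + (W b - W a) * ∫ t in a..b, w t * |v' t| := by
  set G : ℝ → ℝ := fun t => ∫ s in a..t, |v' s|
  have hv : ContinuousOn v (Icc a b) := fun t ht => (hderiv t ht).continuousAt.continuousWithinAt
  have hWc : ContinuousOn W (Icc a b) := fun t ht => (hW t ht).continuousAt.continuousWithinAt
  have hG : ContinuousOn G (Icc a b) := by
    rw [← uIcc_of_le hab]
    exact continuousOn_primitive_interval
      (by rw [uIcc_of_le hab]; exact hcont.abs.integrableOn_Icc)
  have hWb : ∫ t in a..b, w t = W b - W a :=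
    integral_eq_sub_of_hasDerivAt (by rwa [uIcc_of_le hab]) (hw.intervalIntegrable_of_Icc hab)
  have hi : ∀ {f : ℝ → ℝ}, ContinuousOn f (Icc a b) → IntervalIntegrable f volume a b :=
    fun hf => hf.intervalIntegrable_of_Icc hab
  have hw' := hi hw
  have hvw : IntervalIntegrable (fun t => |v t| * w t) volume a b := hi (by fun_prop)
  have hwG : IntervalIntegrable (fun t => w t * G t) volume a b := hi (hw.mul hG)
  have hg : IntervalIntegrable (fun t => |v' t|) volume a b := hi (by fun_prop)
  have hWg : IntervalIntegrable (fun t => (W b - W t) * |v' t|) volume a b := hi (by fun_prop)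
  have hcomb : ∫ s in a..b, (α * (W b - W s) + β * (W s - W a)) * |v' s| =
      β * (W b - W a) * G b + (α - β) * ∫ s in a..b, (W b - W s) * |v' s| := by
    rw [← integral_const_mul, ← integral_const_mul, ← integral_add (hg.const_mul _)
      (hWg.const_mul _)]
    exact integral_congr fun s _ => by ring
  calc (W b - W a) * (α * |v a| + β * |v b|)
        = ∫ t in a..b, w t * (α * |v a| + β * |v b|) := by rw [integral_mul_const, hWb]
    _ ≤ ∫ t in a..b,
          ((α + β) * (|v t| * w t) + β * G b * w t + (α - β) * (w t * G t)) := by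
        refine integral_mono_on hab (hw'.mul_const _)
          (((hvw.const_mul _).add (hw'.const_mul _)).add (hwG.const_mul _)) fun t ht => ?_
        linear_combination
          mul_le_mul_of_nonneg_left (abs_endpoints_le hα hβ hderiv hcont ht) (hw0 t ht)
    _ = (α + β) * (∫ t in a..b, |v t| * w t) +
          ∫ s in a..b, (α * (W b - W s) + β * (W s - W a)) * |v' s| := by
        rw [integral_add ((hvw.const_mul _).add (hw'.const_mul _)) (hwG.const_mul _),
          integral_add (hvw.const_mul _) (hw'.const_mul _), integral_const_mul, integral_const_mul,
          integral_const_mul, hWb, integral_mul_primitive_eq hab hW hw' hcont.abs, hcomb]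
        ring
    _ ≤ (α + β) * (∫ t in a..b, |v t| * w t) + (W b - W a) * ∫ t in a..b, w t * |v' t| := by
        rw [← integral_const_mul (W b - W a)]
        gcongr
        refine integral_mono_on hab ?_ ?_ fun s hs => ?_
        · exact hi (by fun_prop)
        · exact hi (by fun_prop)
        rw [← mul_assoc]
        exact mul_le_mul_of_nonneg_right (hchord s hs) (abs_nonneg _)

theorem radial_trace_inequality_annulus (a b : ℝ) (N : ℕ) (hN : 2 ≤ N)
    (ha : 0 < a) (hab : a < b) (v v' : ℝ → ℝ)
    (hderiv : ∀ t ∈ Icc a b, HasDerivAt v (v' t) t)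
    (hcont : ContinuousOn v' (Icc a b)) :
    a ^ (N - 1) * |v a| + b ^ (N - 1) * |v b| ≤
      (((N : ℝ) * a ^ (N - 1) + (N : ℝ) * b ^ (N - 1)) / (b ^ N - a ^ N)) *
          (∫ r in a..b, |v r| * r ^ (N - 1)) +
        ∫ t in a..b, t ^ (N - 1) * |v' t| := by
  obtain ⟨m, rfl⟩ : ∃ m, N = m + 1 := ⟨N - 1, by omega⟩
  rw [Nat.add_sub_cancel]
  push_cast
  have hm : (0 : ℝ) < m + 1 := by positivity
  have hD : 0 < b ^ (m + 1) - a ^ (m + 1) := sub_pos.2 (pow_lt_pow_left₀ hab ha.le m.succ_ne_zero)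
  have hW (t : ℝ) : HasDerivAt (fun s : ℝ => s ^ (m + 1) / ((m : ℝ) + 1)) (t ^ m) t :=
    ((hasDerivAt_pow (m + 1) t).div_const ((m : ℝ) + 1)).congr_deriv (by
      rw [Nat.add_sub_cancel, Nat.cast_succ, mul_div_cancel_left₀ _ hm.ne'])
  have key := weighted_abs_endpoints_le hab.le (pow_nonneg ha.le m)
    (pow_nonneg (ha.trans hab).le m) hderiv hcont (fun t _ => hW t) (by fun_prop)
    (fun t ht => pow_nonneg (ha.le.trans ht.1) m)
    fun s hs => by linear_combination (1 / ((m : ℝ) + 1)) * pow_chord_le ha.le hs.1 hs.2 m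
  field_simp at key
  rw [div_mul_eq_mul_div, ← sub_le_iff_le_add, le_div_iff₀ hD]
  linear_combination key
end
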